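/- arXiv:2402.10630 — 2 statements merged into one kernel-verified Lean document; each statement's English description precedes it below -/
import Mathlib

section
/- Let X and Y be real vector spaces equipped with quasi-norms ‖·‖_X and ‖·‖_Y with quasi-triangle constants κ_X and κ_Y, let n ≥ 1, let f = (f_1,…,f_n) ∈ X^n and g = (g_1,…,g_n) ∈ Y^n, let 0 < c₁ ≤ c₂, and let A and B be reducing matrices (with constants c₁, c₂) for f with respect to ‖·‖_X and for g with respect to ‖·‖_Y, respectively. Then there is a constant C depending only on n, c₁, c₂, κ_X, κ_Y such that for every pair of tuples z = (z_1,…,z_n) ∈ X^n, w = (w_1,…,w_n) ∈ Y^n with ∑_{i=1}^n z_i ⊗ w_i = ∑_{i=1}^n f_i ⊗ g_i in the algebraic tensor product X ⊗_ℝ Y, one has ‖A·B‖_op ≤ C · ∑_{i=1}^n ‖z_i‖_X·‖w_i‖_Y. -/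
open scoped TensorProduct
open scoped Matrix

universe u v

/-- The Euclidean norm on `Fin k → ℝ`. -/
noncomputable def euclNorm {k : ℕ} (x : Fin k → ℝ) : ℝ := Real.sqrt (∑ i, x i ^ 2)

/-- The operator norm of an `n × n` real matrix with respect to the Euclidean norm. -/
noncomputable def opNorm {n : ℕ} (M : Matrix (Fin n) (Fin n) ℝ) : ℝ :=
  ‖Matrix.toEuclideanCLM (𝕜 := ℝ) M‖

/-- A quasi-norm on a real vector space `Z` with quasi-triangle constant `κ`. -/
def IsQuasiNorm {Z : Type*} [AddCommGroup Z] [Module ℝ Z] (N : Z → ℝ) (κ : ℝ) : Prop :=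
  (∀ z, 0 ≤ N z) ∧ (∀ (l : ℝ) (z : Z), N (l • z) = |l| * N z) ∧
    ∀ z w, N (z + w) ≤ κ * (N z + N w)

/-- `A` is a reducing matrix for the tuple `f` with respect to `N` (with constants
`c₁ ≤ c₂`): `A` is positive semidefinite and `c₁|Ae| ≤ N(∑ eᵢ • fᵢ) ≤ c₂|Ae|`. -/
def IsReducing {X : Type*} [AddCommGroup X] [Module ℝ X] (N : X → ℝ)
    {n : ℕ} (f : Fin n → X) (c₁ c₂ : ℝ) (A : Matrix (Fin n) (Fin n) ℝ) : Prop :=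
  A.PosSemidef ∧ ∀ e : Fin n → ℝ,
    c₁ * euclNorm (A.mulVec e) ≤ N (∑ i, e i • f i) ∧
      N (∑ i, e i • f i) ≤ c₂ * euclNorm (A.mulVec e)

open Matrix in
lemma euclNorm_nonneg {k : ℕ} (x : Fin k → ℝ) : 0 ≤ euclNorm x := Real.sqrt_nonneg _

lemma euclNorm_equiv {k : ℕ} (x : EuclideanSpace ℝ (Fin k)) :
    euclNorm (WithLp.equiv 2 _ x) = ‖x‖ := by
  rw [EuclideanSpace.norm_eq]
  unfold euclNorm
  congr 1
  refine Finset.sum_congr rfl fun i _ => ?_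
  simp [Real.norm_eq_abs, sq_abs]

lemma abs_dot_le {k : ℕ} (x y : Fin k → ℝ) : |∑ i, x i * y i| ≤ euclNorm x * euclNorm y := by
  set x' := (WithLp.equiv 2 (Fin k → ℝ)).symm x with hx'
  set y' := (WithLp.equiv 2 (Fin k → ℝ)).symm y with hy'
  have h := abs_real_inner_le_norm x' y'
  have h1 : (inner ℝ x' y' : ℝ) = ∑ i, x i * y i := by
    simp [PiLp.inner_apply, RCLike.inner_apply, hx', hy', mul_comm]
  have h2 : euclNorm x = ‖x'‖ := by
    rw [hx', ← euclNorm_equiv x']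
    simp [hx']
  have h3 : euclNorm y = ‖y'‖ := by
    rw [hy', ← euclNorm_equiv y']
    simp [hy']
  rw [h1] at h
  rw [h2, h3]
  exact h

lemma IsQuasiNorm.zero' {X : Type*} [AddCommGroup X] [Module ℝ X] {N : X → ℝ} {κ : ℝ}
    (h : IsQuasiNorm N κ) : N 0 = 0 := by
  have := h.2.1 0 0
  simpa using this

lemma IsQuasiNorm.finsetSum {X : Type*} [AddCommGroup X] [Module ℝ X] {N : X → ℝ} {κ : ℝ}
    (hκ : 1 ≤ κ) (h : IsQuasiNorm N κ) {ι : Type*} (s : Finset ι) (x : ι → X) :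
    N (∑ i ∈ s, x i) ≤ κ ^ s.card * ∑ i ∈ s, N (x i) := by
  classical
  induction s using Finset.cons_induction with
  | empty => simp [h.zero']
  | cons a s ha ih =>
    rw [Finset.sum_cons, Finset.sum_cons, Finset.card_cons]
    have h1 := h.2.2 (x a) (∑ i ∈ s, x i)
    have hκ0 : (0:ℝ) ≤ κ := le_trans zero_le_one hκ
    have hpow : (1:ℝ) ≤ κ ^ s.card := one_le_pow₀ hκ
    have hsum0 : (0:ℝ) ≤ ∑ i ∈ s, N (x i) := Finset.sum_nonneg fun i _ => h.1 _
    have hNa : 0 ≤ N (x a) := h.1 _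
    have : N (x a + ∑ i ∈ s, x i) ≤ κ * (N (x a) + κ ^ s.card * ∑ i ∈ s, N (x i)) := by
      refine le_trans h1 ?_
      have := ih
      nlinarith
    refine le_trans this ?_
    rw [pow_succ, mul_comm (κ ^ s.card) κ, mul_assoc]
    have : N (x a) + κ ^ s.card * ∑ i ∈ s, N (x i) ≤
        κ ^ s.card * (N (x a) + ∑ i ∈ s, N (x i)) := by nlinarith
    nlinarith

lemma IsQuasiNorm.sum_smul_le {X : Type*} [AddCommGroup X] [Module ℝ X] {N : X → ℝ} {κ : ℝ}
    (hκ : 1 ≤ κ) (h : IsQuasiNorm N κ) {n : ℕ} (e : Fin n → ℝ) (x : Fin n → X) :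
    N (∑ i, e i • x i) ≤ κ ^ n * ∑ i, |e i| * N (x i) := by
  have := h.finsetSum hκ Finset.univ (fun i => e i • x i)
  simpa [h.2.1, Finset.card_univ] using this

/-- Key functional lemma: given a reducing matrix `A` for `f` and any tuple `z` and vector `u`
there is a linear functional with prescribed values `(Au)ᵢ` on `f` and controlled at `z`. -/
lemma exists_functional {n : ℕ} {X : Type u} [AddCommGroup X] [Module ℝ X]
    {Nx : X → ℝ} {κ c₁ c₂ : ℝ} (hκ : 1 ≤ κ) (hc₁ : 0 < c₁)
    (hN : IsQuasiNorm Nx κ) {f : Fin n → X} (z : Fin n → X) {A : Matrix (Fin n) (Fin n) ℝ}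
    (hA : IsReducing Nx f c₁ c₂ A) (u : Fin n → ℝ) :
    ∃ φ : X →ₗ[ℝ] ℝ, (∀ i, φ (f i) = A.mulVec u i) ∧
      ∀ i, |φ (z i)| ≤ euclNorm u * κ ^ n / c₁ * Nx (z i) := by
  classical
  have hAsymm : Aᵀ = A := by
    have h2 : Aᴴ = A := hA.1.1
    rwa [Matrix.conjTranspose_eq_transpose_of_trivial] at h2
  set c : Fin n → ℝ := A.mulVec u with hc
  set T : ((Fin n → ℝ) × (Fin n → ℝ)) →ₗ[ℝ] X :=
    (Fintype.linearCombination ℝ f).coprod (Fintype.linearCombination ℝ z) with hT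
  set M0 : ((Fin n → ℝ) × (Fin n → ℝ)) →ₗ[ℝ] ℝ :=
    (Fintype.linearCombination ℝ c).comp (LinearMap.fst ℝ (Fin n → ℝ) (Fin n → ℝ)) with hM0
  set K := LinearMap.ker T with hK
  set γ := euclNorm u * κ ^ n / c₁ with hγ
  have hγ0 : 0 ≤ γ := by
    apply div_nonneg _ hc₁.le
    exact mul_nonneg (euclNorm_nonneg u) (pow_nonneg (le_trans zero_le_one hκ) n)
  set p : ((Fin n → ℝ) × (Fin n → ℝ)) → ℝ := fun ab => γ * ∑ i, |ab.2 i| * Nx (z i) with hp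
  have hp_nonneg : ∀ ab, 0 ≤ p ab := by
    intro ab
    apply mul_nonneg hγ0
    exact Finset.sum_nonneg fun i _ => mul_nonneg (abs_nonneg _) (hN.1 _)
  have hphom : ∀ r : ℝ, 0 < r → ∀ ab, p (r • ab) = r * p ab := by
    intro r hr ab
    simp only [hp, Prod.smul_snd, Pi.smul_apply, smul_eq_mul, abs_mul, abs_of_pos hr,
      Finset.mul_sum]
    refine Finset.sum_congr rfl fun i _ => by ring
  have hpadd : ∀ x y, p (x + y) ≤ p x + p y := by
    intro x y
    simp only [hp]
    rw [← mul_add, ← Finset.sum_add_distrib]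
    apply mul_le_mul_of_nonneg_left _ hγ0
    refine Finset.sum_le_sum fun i _ => ?_
    rw [← add_mul]
    exact mul_le_mul_of_nonneg_right (abs_add_le _ _) (hN.1 _)
  -- the partial functional on ker T
  set L : K →ₗ[ℝ] ℝ := (-M0).comp K.subtype with hL
  have hdom : ∀ x : K, L x ≤ p (x : (Fin n → ℝ) × (Fin n → ℝ)) := by
    rintro ⟨⟨a, b⟩, hab⟩
    have hab' : ∑ i, a i • f i + ∑ i, b i • z i = 0 := by
      have : T (a, b) = 0 := hab
      simpa [hT, Fintype.linearCombination_apply] using this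
    have hrep : ∑ i, a i • f i = ∑ i, (-b i) • z i := by
      have h0 : ∑ i, (-b i) • z i = -∑ i, b i • z i := by
        simp [neg_smul]
      rw [h0, eq_neg_iff_add_eq_zero]
      exact hab'
    have h3 : c₁ * euclNorm (A.mulVec a) ≤ Nx (∑ i, a i • f i) := (hA.2 a).1
    have h4 : Nx (∑ i, (-b i) • z i) ≤ κ ^ n * ∑ i, |b i| * Nx (z i) := by
      have := hN.sum_smul_le hκ (fun i => -b i) z
      simpa using this
    have h5 : c₁ * euclNorm (A.mulVec a) ≤ κ ^ n * ∑ i, |b i| * Nx (z i) := by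
      rw [hrep] at h3; exact le_trans h3 h4
    have hLx : L ⟨(a, b), hab⟩ = -(∑ j, a j * c j) := by
      simp [hL, hM0, Fintype.linearCombination_apply, smul_eq_mul]
    rw [hLx]
    have hdot : ∑ j, a j * c j = ∑ j, u j * A.mulVec a j := by
      have e1 : ∑ j, a j * c j = a ⬝ᵥ (A.mulVec u) := rfl
      have e2 : ∑ j, u j * A.mulVec a j = u ⬝ᵥ (A.mulVec a) := rfl
      rw [e1, e2, Matrix.dotProduct_mulVec, ← Matrix.mulVec_transpose, hAsymm,
        dotProduct_comm, Matrix.dotProduct_mulVec, ← Matrix.mulVec_transpose, hAsymm]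
    have habs : |∑ j, u j * A.mulVec a j| ≤ euclNorm u * euclNorm (A.mulVec a) :=
      abs_dot_le u (A.mulVec a)
    have h6 : euclNorm u * euclNorm (A.mulVec a) ≤ p ((a, b)) := by
      simp only [hp]
      rw [hγ]
      rw [div_mul_eq_mul_div, le_div_iff₀ hc₁] at *
      calc euclNorm u * euclNorm (A.mulVec a) * c₁
          = euclNorm u * (c₁ * euclNorm (A.mulVec a)) := by ring
        _ ≤ euclNorm u * (κ ^ n * ∑ i, |b i| * Nx (z i)) := by
            exact mul_le_mul_of_nonneg_left h5 (euclNorm_nonneg u)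
        _ = euclNorm u * κ ^ n * ∑ i, |b i| * Nx (z i) := by ring
    calc -(∑ j, a j * c j) ≤ |∑ j, a j * c j| := neg_le_abs _
      _ = |∑ j, u j * A.mulVec a j| := by rw [hdot]
      _ ≤ euclNorm u * euclNorm (A.mulVec a) := habs
      _ ≤ p ((a, b)) := h6
  obtain ⟨s, hs1, hs2⟩ := exists_extension_of_le_sublinear ⟨K, L⟩ p hphom hpadd hdom
  have habs : ∀ ab, |s ab| ≤ p ab := by
    intro ab
    rw [abs_le]
    constructor
    · have h1 := hs2 (-ab)
      rw [map_neg] at h1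
      have h2 : p (-ab) = p ab := by
        simp only [hp, Prod.snd_neg, Pi.neg_apply, abs_neg]
      linarith [h1, h2.symm.le]
    · exact hs2 ab
  set t : ((Fin n → ℝ) × (Fin n → ℝ)) →ₗ[ℝ] ℝ := s + M0 with ht
  have hker : K ≤ LinearMap.ker t := by
    intro x hx
    have h1 : s x = L ⟨x, hx⟩ := hs1 ⟨x, hx⟩
    have h2 : L ⟨x, hx⟩ = -(M0 x) := by simp [hL]
    simp only [LinearMap.mem_ker, ht, LinearMap.add_apply]
    rw [h1, h2]; ring
  set φbar := K.liftQ t hker with hφbar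
  set e := T.quotKerEquivRange with he
  obtain ⟨q, hq⟩ := Submodule.exists_isCompl (LinearMap.range T)
  set φ : X →ₗ[ℝ] ℝ :=
    (φbar.comp e.symm.toLinearMap).comp
      (((LinearMap.range T).linearProjOfIsCompl q hq)) with hφ
  have hφT : ∀ lam, φ (T lam) = t lam := by
    intro lam
    have hmem : T lam ∈ LinearMap.range T := LinearMap.mem_range_self _ _
    have h1 : ((LinearMap.range T).linearProjOfIsCompl q hq) (T lam) = ⟨T lam, hmem⟩ :=
      Submodule.linearProjOfIsCompl_apply_left hq ⟨T lam, hmem⟩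
    have h2 : e.symm ⟨T lam, hmem⟩ = Submodule.Quotient.mk lam := by
      rw [LinearEquiv.symm_apply_eq]
      exact Subtype.ext (T.quotKerEquivRange_apply_mk lam)
    simp only [hφ, LinearMap.comp_apply, h1, LinearEquiv.coe_toLinearMap, h2, hφbar,
      Submodule.liftQ_apply]
  refine ⟨φ, ?_, ?_⟩
  · intro i
    have hfi : f i = T (Pi.single i 1, 0) := by
      simp [hT, Fintype.linearCombination_apply, Pi.single_apply, ite_smul]
    rw [hfi, hφT]
    have hM : M0 (Pi.single i 1, (0 : Fin n → ℝ)) = c i := by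
      simp [hM0, Fintype.linearCombination_apply, smul_eq_mul, Pi.single_apply,
        Finset.sum_ite_eq']
    have hps : p (Pi.single i 1, (0 : Fin n → ℝ)) = 0 := by
      simp [hp]
    have hs0 : s (Pi.single i 1, (0 : Fin n → ℝ)) = 0 := by
      have := habs (Pi.single i 1, (0 : Fin n → ℝ))
      rw [hps] at this
      exact abs_eq_zero.mp (le_antisymm this (abs_nonneg _))
    simp only [ht, LinearMap.add_apply, hs0, hM, zero_add]
  · intro i
    have hzi : z i = T (0, Pi.single i 1) := by
      simp [hT, Fintype.linearCombination_apply, Pi.single_apply, ite_smul]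
    have hM : M0 ((0 : Fin n → ℝ), Pi.single i 1) = 0 := by
      simp [hM0, Fintype.linearCombination_apply]
    have hps : p ((0 : Fin n → ℝ), Pi.single i 1) = γ * Nx (z i) := by
      simp only [hp]
      congr 1
      have hsum : ∑ x, |(Pi.single i 1 : Fin n → ℝ) x| * Nx (z x)
          = |(Pi.single i 1 : Fin n → ℝ) i| * Nx (z i) :=
        Finset.sum_eq_single i (fun j _ hj => by simp [Pi.single_apply, hj])
          (fun h => absurd (Finset.mem_univ i) h)
      rw [hsum]
      simp
    have hb := habs ((0 : Fin n → ℝ), Pi.single i 1)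
    rw [hps] at hb
    have hval : φ (z i) = s ((0 : Fin n → ℝ), Pi.single i 1) := by
      rw [hzi, hφT]
      simp only [ht, LinearMap.add_apply, hM, add_zero]
    rw [hval]
    exact hb

/-- **`‖A·B‖_op` is dominated by every `n`-term representation of the tensor** (part of
Proposition 3.3): if `∑ zᵢ ⊗ wᵢ = ∑ fᵢ ⊗ gᵢ`, then `‖A·B‖_op ≲ ∑ ‖zᵢ‖_X ‖wᵢ‖_Y`,
where `A, B` are reducing matrices for `f, g`. -/
theorem stmt10 (n : ℕ) (hn : 1 ≤ n) (c₁ c₂ κX κY : ℝ) (hc₁ : 0 < c₁) (hc₁₂ : c₁ ≤ c₂)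
    (hκX : 1 ≤ κX) (hκY : 1 ≤ κY) :
    ∃ C : ℝ, 0 < C ∧
      ∀ (X : Type u) (Y : Type v) [AddCommGroup X] [Module ℝ X] [AddCommGroup Y] [Module ℝ Y]
        (Nx : X → ℝ) (Ny : Y → ℝ), IsQuasiNorm Nx κX → IsQuasiNorm Ny κY →
        ∀ (f : Fin n → X) (g : Fin n → Y) (A B : Matrix (Fin n) (Fin n) ℝ),
          IsReducing Nx f c₁ c₂ A → IsReducing Ny g c₁ c₂ B →
          ∀ (z : Fin n → X) (w : Fin n → Y),
            (∑ i, z i ⊗ₜ[ℝ] w i) = (∑ i, f i ⊗ₜ[ℝ] g i) →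
            opNorm (A * B) ≤ C * ∑ i, Nx (z i) * Ny (w i) := by
  classical
  have hκX0 : (0:ℝ) < κX := lt_of_lt_of_le one_pos hκX
  have hκY0 : (0:ℝ) < κY := lt_of_lt_of_le one_pos hκY
  refine ⟨κX ^ n * κY ^ n / (c₁ * c₁), by positivity, ?_⟩
  intro X Y _ _ _ _ Nx Ny hNx hNy f g A B hA hB z w hzw
  set C := κX ^ n * κY ^ n / (c₁ * c₁) with hC
  set S := ∑ i, Nx (z i) * Ny (w i) with hS
  have hS0 : 0 ≤ S :=
    Finset.sum_nonneg fun i _ => mul_nonneg (hNx.1 _) (hNy.1 _)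
  have hC0 : 0 < C := by rw [hC]; positivity
  have hBsymm : Bᵀ = B := by
    have h2 : Bᴴ = B := hB.1.1
    rwa [Matrix.conjTranspose_eq_transpose_of_trivial] at h2
  have key : ∀ u v0 : Fin n → ℝ,
      ∑ i, A.mulVec u i * B.mulVec v0 i ≤ C * S * (euclNorm u * euclNorm v0) := by
    intro u v0
    obtain ⟨φ, hφf, hφz⟩ := exists_functional hκX hc₁ hNx z hA u
    obtain ⟨ψ, hψg, hψw⟩ := exists_functional hκY hc₁ hNy w hB v0
    have hten := congrArg (TensorProduct.lift (φ.smulRight ψ)) hzw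
    simp only [map_sum, TensorProduct.lift.tmul, LinearMap.smulRight_apply,
      LinearMap.smul_apply, smul_eq_mul] at hten
    have h1 : ∑ i, A.mulVec u i * B.mulVec v0 i = ∑ i, φ (z i) * ψ (w i) := by
      rw [hten]
      refine Finset.sum_congr rfl fun i _ => by rw [hφf, hψg]
    set γX := euclNorm u * κX ^ n / c₁ with hγX
    set γY := euclNorm v0 * κY ^ n / c₁ with hγY
    have hγX0 : 0 ≤ γX := by
      apply div_nonneg _ hc₁.le
      exact mul_nonneg (euclNorm_nonneg u) (pow_nonneg hκX0.le n)
    have hγY0 : 0 ≤ γY := by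
      apply div_nonneg _ hc₁.le
      exact mul_nonneg (euclNorm_nonneg v0) (pow_nonneg hκY0.le n)
    have h2 : ∑ i, φ (z i) * ψ (w i) ≤ ∑ i, (γX * Nx (z i)) * (γY * Ny (w i)) := by
      refine Finset.sum_le_sum fun i _ => ?_
      calc φ (z i) * ψ (w i) ≤ |φ (z i) * ψ (w i)| := le_abs_self _
        _ = |φ (z i)| * |ψ (w i)| := abs_mul _ _
        _ ≤ (γX * Nx (z i)) * (γY * Ny (w i)) := by
            apply mul_le_mul (hφz i) (hψw i) (abs_nonneg _)
            exact mul_nonneg hγX0 (hNx.1 _)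
    have h3 : ∑ i, (γX * Nx (z i)) * (γY * Ny (w i)) = γX * γY * S := by
      rw [hS, Finset.mul_sum]
      refine Finset.sum_congr rfl fun i _ => by ring
    have h4 : γX * γY = C * (euclNorm u * euclNorm v0) := by
      rw [hγX, hγY, hC]
      field_simp
    rw [h1]
    calc ∑ i, φ (z i) * ψ (w i) ≤ γX * γY * S := by rw [← h3]; exact h2
      _ = C * S * (euclNorm u * euclNorm v0) := by rw [h4]; ring
  -- conclude operator norm bound
  show ‖Matrix.toEuclideanCLM (𝕜 := ℝ) (A * B)‖ ≤ C * S
  apply ContinuousLinearMap.opNorm_le_bound _ (mul_nonneg hC0.le hS0)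
  intro x
  set Tx := Matrix.toEuclideanCLM (𝕜 := ℝ) (A * B) x with hTx
  set u0 : Fin n → ℝ := WithLp.equiv 2 _ Tx with hu0
  set x0 : Fin n → ℝ := WithLp.equiv 2 _ x with hx0
  have hu0eq : u0 = (A * B).mulVec x0 := by
    rw [hu0, hTx]
    exact Matrix.ofLp_toEuclideanCLM _ _
  have hnormTx : ‖Tx‖ = euclNorm u0 := (euclNorm_equiv Tx).symm
  have hnormx : ‖x‖ = euclNorm x0 := (euclNorm_equiv x).symm
  have hinner : ‖Tx‖ * ‖Tx‖ = ∑ i, u0 i * u0 i := by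
    rw [← real_inner_self_eq_norm_mul_norm Tx]
    simp only [PiLp.inner_apply, RCLike.inner_apply, conj_trivial, hu0]
    rfl
  have hrearr : ∑ i, u0 i * u0 i ≤ C * S * (euclNorm u0 * euclNorm x0) := by
    have e1 : ∑ i, u0 i * u0 i = u0 ⬝ᵥ ((A * B).mulVec x0) := by
      rw [← hu0eq]; rfl
    have e2 : u0 ⬝ᵥ ((A * B).mulVec x0) = (A.mulVec u0) ⬝ᵥ (B.mulVec x0) := by
      rw [← Matrix.mulVec_mulVec, Matrix.dotProduct_mulVec u0 A, ← Matrix.mulVec_transpose]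
      have hAsymm : Aᵀ = A := by
        have h2 : Aᴴ = A := hA.1.1
        rwa [Matrix.conjTranspose_eq_transpose_of_trivial] at h2
      rw [hAsymm]
    have e3 : (A.mulVec u0) ⬝ᵥ (B.mulVec x0) = ∑ i, A.mulVec u0 i * B.mulVec x0 i := rfl
    rw [e1, e2, e3]
    exact key u0 x0
  have hfin : ‖Tx‖ * ‖Tx‖ ≤ (C * S * ‖x‖) * ‖Tx‖ := by
    rw [hinner]
    calc ∑ i, u0 i * u0 i ≤ C * S * (euclNorm u0 * euclNorm x0) := hrearr
      _ = (C * S * ‖x‖) * ‖Tx‖ := by rw [hnormTx, hnormx]; ring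
  rcases eq_or_lt_of_le (norm_nonneg Tx) with h0 | h0
  · rw [← h0]
    exact mul_nonneg (mul_nonneg hC0.le hS0) (norm_nonneg x)
  · exact le_of_mul_le_mul_right hfin h0
end

section
/- Let Z be a real vector space with a quasi-norm ‖·‖_Z of quasi-triangle constant κ, let m, n ≥ 1, let A be a positive semidefinite real m×m matrix and B a positive semidefinite real n×n matrix, and let τ : ℝ^m × ℝ^n → Z be a bilinear map such that ‖τ(x,y)‖_Z ≤ |x|·|y| + |Ax|·|By| for all x ∈ ℝ^m and y ∈ ℝ^n, where |·| denotes Euclidean norms. Then there exist bilinear maps τ₀, τ₁ : ℝ^m × ℝ^n → Z and a constant C depending only on m, n, κ such that τ = τ₀ + τ₁, ‖τ₀(x,y)‖_Z ≤ C·|x|·|y| for all x, y, and ‖τ₁(x,y)‖_Z ≤ C·|Ax|·|By| for all x, y. -/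
open scoped TensorProduct

universe u v

lemma quasiNorm_zero {Z : Type*} [AddCommGroup Z] [Module ℝ Z] {N : Z → ℝ} {κ : ℝ}
    (hN : IsQuasiNorm N κ) : N 0 = 0 := by
  have := hN.2.1 0 0
  simpa using this

lemma quasiNorm_sum {Z : Type*} [AddCommGroup Z] [Module ℝ Z] {N : Z → ℝ} {κ : ℝ}
    (hN : IsQuasiNorm N κ) (hκ : 1 ≤ κ) {ι : Type*} (s : Finset ι) (f : ι → Z) :
    N (∑ i ∈ s, f i) ≤ κ ^ s.card * ∑ i ∈ s, N (f i) := by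
  classical
  induction s using Finset.induction with
  | empty => simp [quasiNorm_zero hN]
  | insert a s h ih =>
    rw [Finset.sum_insert h, Finset.sum_insert h, Finset.card_insert_of_notMem h]
    have hκ0 : (0:ℝ) ≤ κ := le_trans zero_le_one hκ
    have hpow : (1:ℝ) ≤ κ ^ s.card := one_le_pow₀ hκ
    calc N (f a + ∑ i ∈ s, f i) ≤ κ * (N (f a) + N (∑ i ∈ s, f i)) := hN.2.2 _ _
      _ ≤ κ * (κ ^ s.card * N (f a) + κ ^ s.card * ∑ i ∈ s, N (f i)) := by
          apply mul_le_mul_of_nonneg_left _ hκ0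
          have h1 : N (f a) ≤ κ ^ s.card * N (f a) := le_mul_of_one_le_left (hN.1 _) hpow
          exact add_le_add h1 ih
      _ = κ ^ (s.card + 1) * (N (f a) + ∑ i ∈ s, N (f i)) := by ring

lemma euclNorm_eq {k : ℕ} (x : EuclideanSpace ℝ (Fin k)) : euclNorm x = ‖x‖ := by
  rw [EuclideanSpace.norm_eq]
  simp only [euclNorm, Real.norm_eq_abs, sq_abs]

/-- Parseval-type computation. -/
lemma euclNorm_sum_smul {k : ℕ} (b : OrthonormalBasis (Fin k) ℝ (EuclideanSpace ℝ (Fin k)))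
    (w : Fin k → ℝ) :
    euclNorm (∑ i, w i • (b i : Fin k → ℝ)) = Real.sqrt (∑ i, w i ^ 2) := by
  classical
  have h1 : euclNorm (∑ i, w i • (b i : Fin k → ℝ))
      = ‖(∑ i, w i • b i : EuclideanSpace ℝ (Fin k))‖ :=
    by rw [← euclNorm_eq, WithLp.ofLp_sum]; simp only [WithLp.ofLp_smul]
  rw [h1, ← b.repr.norm_map, map_sum]
  simp_rw [map_smul, b.repr_self]
  rw [EuclideanSpace.norm_eq]
  congr 1
  apply Finset.sum_congr rfl
  intro j _
  have h : (∑ x : Fin k, w x • EuclideanSpace.single x (1:ℝ)) j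
      = ∑ x : Fin k, (w x • EuclideanSpace.single x (1:ℝ)) j :=
    by rw [WithLp.ofLp_sum]; exact Finset.sum_apply j Finset.univ _
  rw [h]
  simp [EuclideanSpace.single_apply]

lemma sum_abs_le_sqrt {k : ℕ} (w : Fin k → ℝ) :
    ∑ i, |w i| ≤ Real.sqrt k * Real.sqrt (∑ i, w i ^ 2) := by
  have h := Finset.sum_mul_sq_le_sq_mul_sq Finset.univ (fun i => |w i|) (fun _ => (1:ℝ))
  have h2 : (∑ i, |w i|) ^ 2 ≤ (∑ i : Fin k, w i ^ 2) * k := by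
    simpa [sq_abs] using h
  have h3 : ∑ i, |w i| ≤ Real.sqrt ((∑ i : Fin k, w i ^ 2) * k) := by
    rw [← Real.sqrt_sq (Finset.sum_nonneg fun i _ => abs_nonneg _)]
    exact Real.sqrt_le_sqrt h2
  calc ∑ i, |w i| ≤ Real.sqrt ((∑ i : Fin k, w i ^ 2) * k) := h3
    _ = Real.sqrt k * Real.sqrt (∑ i : Fin k, w i ^ 2) := by
        rw [Real.sqrt_mul (Finset.sum_nonneg fun i _ => sq_nonneg _), mul_comm]

/-- Key estimate: quasi-norm of a partial bilinear expansion. -/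
lemma key_estimate {Z : Type*} [AddCommGroup Z] [Module ℝ Z] {N : Z → ℝ} {κ : ℝ}
    (hN : IsQuasiNorm N κ) (hκ : 1 ≤ κ) {m n : ℕ}
    (S : Finset (Fin m × Fin n)) (T : Fin m × Fin n → Z)
    (a : Fin m → ℝ) (b : Fin n → ℝ) (ha : ∀ i, 0 ≤ a i) (hb : ∀ j, 0 ≤ b j)
    (hT : ∀ p ∈ S, N (T p) ≤ 2 * (a p.1 * b p.2))
    (c : Fin m → ℝ) (d : Fin n → ℝ) :
    N (∑ p ∈ S, (c p.1 * d p.2) • T p)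
      ≤ 2 * κ ^ (m * n) * ((∑ i, |c i| * a i) * (∑ j, |d j| * b j)) := by
  classical
  have hκ0 : (0:ℝ) ≤ κ := le_trans zero_le_one hκ
  have hcard : S.card ≤ m * n := by
    calc S.card ≤ (Finset.univ : Finset (Fin m × Fin n)).card := Finset.card_le_card S.subset_univ
      _ = m * n := by simp
  have hpow : κ ^ S.card ≤ κ ^ (m * n) := pow_le_pow_right₀ hκ hcard
  have hpow0 : (0:ℝ) ≤ κ ^ S.card := pow_nonneg hκ0 _
  calc N (∑ p ∈ S, (c p.1 * d p.2) • T p)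
      ≤ κ ^ S.card * ∑ p ∈ S, N ((c p.1 * d p.2) • T p) := quasiNorm_sum hN hκ S _
    _ = κ ^ S.card * ∑ p ∈ S, |c p.1 * d p.2| * N (T p) := by
        congr 1; exact Finset.sum_congr rfl fun p _ => hN.2.1 _ _
    _ ≤ κ ^ (m * n) * ∑ p ∈ S, |c p.1 * d p.2| * (2 * (a p.1 * b p.2)) := by
        apply mul_le_mul hpow _ _ (by positivity)
        · exact Finset.sum_le_sum fun p hp =>
            mul_le_mul_of_nonneg_left (hT p hp) (abs_nonneg _)
        · exact Finset.sum_nonneg fun p _ => mul_nonneg (abs_nonneg _) (hN.1 _)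
    _ ≤ κ ^ (m * n) * ∑ p : Fin m × Fin n, |c p.1 * d p.2| * (2 * (a p.1 * b p.2)) := by
        apply mul_le_mul_of_nonneg_left _ (pow_nonneg hκ0 _)
        apply Finset.sum_le_sum_of_subset_of_nonneg S.subset_univ
        intro p _ _
        have := ha p.1
        have := hb p.2
        positivity
    _ = 2 * κ ^ (m * n) * ((∑ i, |c i| * a i) * (∑ j, |d j| * b j)) := by
        rw [Fintype.sum_prod_type, Finset.sum_mul_sum]
        simp_rw [abs_mul, Finset.mul_sum]
        apply Finset.sum_congr rfl
        intro i _
        apply Finset.sum_congr rfl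
        intro j _
        ring

/-- **Splitting of a bilinear map dominated by `|x||y| + |Ax||By|`** (Lemma 5.1, the case
`A₀ = B₀ = I` with `A = A₁`, `B = B₁` positive semidefinite): `τ = τ₀ + τ₁` with
`‖τ₀(x,y)‖_Z ≲ |x||y|` and `‖τ₁(x,y)‖_Z ≲ |Ax||By|`. -/
theorem stmt16 (m n : ℕ) (hm : 1 ≤ m) (hn : 1 ≤ n) (κ : ℝ) (hκ : 1 ≤ κ) :
    ∃ C : ℝ, 0 < C ∧
      ∀ (Z : Type u) [AddCommGroup Z] [Module ℝ Z] (NZ : Z → ℝ), IsQuasiNorm NZ κ →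
      ∀ (A : Matrix (Fin m) (Fin m) ℝ) (B : Matrix (Fin n) (Fin n) ℝ),
        A.PosSemidef → B.PosSemidef →
      ∀ τ : (Fin m → ℝ) →ₗ[ℝ] (Fin n → ℝ) →ₗ[ℝ] Z,
        (∀ (x : Fin m → ℝ) (y : Fin n → ℝ),
          NZ (τ x y) ≤ euclNorm x * euclNorm y
            + euclNorm (A.mulVec x) * euclNorm (B.mulVec y)) →
        ∃ τ₀ τ₁ : (Fin m → ℝ) →ₗ[ℝ] (Fin n → ℝ) →ₗ[ℝ] Z,
          (∀ (x : Fin m → ℝ) (y : Fin n → ℝ), τ x y = τ₀ x y + τ₁ x y) ∧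
          (∀ (x : Fin m → ℝ) (y : Fin n → ℝ),
            NZ (τ₀ x y) ≤ C * (euclNorm x * euclNorm y)) ∧
          (∀ (x : Fin m → ℝ) (y : Fin n → ℝ),
            NZ (τ₁ x y) ≤ C * (euclNorm (A.mulVec x) * euclNorm (B.mulVec y))) := by
  classical
  have hκ0 : (0:ℝ) ≤ κ := le_trans zero_le_one hκ
  refine ⟨2 * κ ^ (m * n) * (Real.sqrt m * Real.sqrt n), ?_, ?_⟩
  · have hm0 : (0:ℝ) < m := by exact_mod_cast hm
    have hn0 : (0:ℝ) < n := by exact_mod_cast hn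
    have hκ' : (0:ℝ) < κ := lt_of_lt_of_le zero_lt_one hκ
    positivity
  intro Z _ _ NZ hNZ A B hA hB τ hτ
  set bA := hA.1.eigenvectorBasis with hbA
  set bB := hB.1.eigenvectorBasis with hbB
  set lam := hA.1.eigenvalues with hlam
  set mu := hB.1.eigenvalues with hmu
  have hlam0 : ∀ i, 0 ≤ lam i := hA.eigenvalues_nonneg
  have hmu0 : ∀ j, 0 ≤ mu j := hB.eigenvalues_nonneg
  have hmulA : ∀ i, A.mulVec (bA i : Fin m → ℝ) = lam i • (bA i : Fin m → ℝ) := fun i =>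
    hA.1.mulVec_eigenvectorBasis i
  have hmulB : ∀ j, B.mulVec (bB j : Fin n → ℝ) = mu j • (bB j : Fin n → ℝ) := fun j =>
    hB.1.mulVec_eigenvectorBasis j
  -- coefficients
  set c : (Fin m → ℝ) → Fin m → ℝ := fun x i => bA.repr (WithLp.toLp 2 x) i with hc
  set d : (Fin n → ℝ) → Fin n → ℝ := fun y j => bB.repr (WithLp.toLp 2 y) j with hd
  have hxstack : ∀ x : Fin m → ℝ, x = ∑ i, c x i • (bA i : Fin m → ℝ) := by
    intro x
    have h := congrArg WithLp.ofLp (bA.sum_repr (WithLp.toLp 2 x))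
    rw [WithLp.ofLp_sum] at h
    simp only [WithLp.ofLp_smul] at h
    exact h.symm
  have hystack : ∀ y : Fin n → ℝ, y = ∑ j, d y j • (bB j : Fin n → ℝ) := by
    intro y
    have h := congrArg WithLp.ofLp (bB.sum_repr (WithLp.toLp 2 y))
    rw [WithLp.ofLp_sum] at h
    simp only [WithLp.ofLp_smul] at h
    exact h.symm
  have hcadd : ∀ (x x' : Fin m → ℝ) i, c (x + x') i = c x i + c x' i := by
    intro x x' i
    show bA.repr (WithLp.toLp 2 (x + x')) i = _
    rw [WithLp.toLp_add, map_add]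
    rfl
  have hcsmul : ∀ (r : ℝ) (x : Fin m → ℝ) i, c (r • x) i = r * c x i := by
    intro r x i
    show bA.repr (WithLp.toLp 2 (r • x)) i = _
    rw [WithLp.toLp_smul, map_smul]
    rfl
  have hdadd : ∀ (y y' : Fin n → ℝ) j, d (y + y') j = d y j + d y' j := by
    intro y y' j
    show bB.repr (WithLp.toLp 2 (y + y')) j = _
    rw [WithLp.toLp_add, map_add]
    rfl
  have hdsmul : ∀ (r : ℝ) (y : Fin n → ℝ) j, d (r • y) j = r * d y j := by
    intro r y j
    show bB.repr (WithLp.toLp 2 (r • y)) j = _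
    rw [WithLp.toLp_smul, map_smul]
    rfl
  -- norm identities
  have hNx : ∀ x : Fin m → ℝ, euclNorm x = Real.sqrt (∑ i, (c x i) ^ 2) := by
    intro x
    conv_lhs => rw [hxstack x]
    exact euclNorm_sum_smul bA (c x)
  have hNy : ∀ y : Fin n → ℝ, euclNorm y = Real.sqrt (∑ j, (d y j) ^ 2) := by
    intro y
    conv_lhs => rw [hystack y]
    exact euclNorm_sum_smul bB (d y)
  have hAx : ∀ x : Fin m → ℝ, A.mulVec x = ∑ i, (lam i * c x i) • (bA i : Fin m → ℝ) := by
    intro x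
    conv_lhs => rw [hxstack x]
    rw [show A.mulVec (∑ i, c x i • (bA i : Fin m → ℝ))
        = ∑ i, c x i • A.mulVec (bA i : Fin m → ℝ) from by
      rw [← A.mulVecLin_apply, map_sum]; simp [Matrix.mulVecLin_apply]]
    apply Finset.sum_congr rfl
    intro i _
    rw [hmulA i, smul_smul, mul_comm]
  have hBy : ∀ y : Fin n → ℝ, B.mulVec y = ∑ j, (mu j * d y j) • (bB j : Fin n → ℝ) := by
    intro y
    conv_lhs => rw [hystack y]
    rw [show B.mulVec (∑ j, d y j • (bB j : Fin n → ℝ))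
        = ∑ j, d y j • B.mulVec (bB j : Fin n → ℝ) from by
      rw [← B.mulVecLin_apply, map_sum]; simp [Matrix.mulVecLin_apply]]
    apply Finset.sum_congr rfl
    intro j _
    rw [hmulB j, smul_smul, mul_comm]
  have hNAx : ∀ x : Fin m → ℝ, euclNorm (A.mulVec x) = Real.sqrt (∑ i, (lam i * c x i) ^ 2) := by
    intro x
    rw [hAx x]
    exact euclNorm_sum_smul bA _
  have hNBy : ∀ y : Fin n → ℝ, euclNorm (B.mulVec y) = Real.sqrt (∑ j, (mu j * d y j) ^ 2) := by
    intro y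
    rw [hBy y]
    exact euclNorm_sum_smul bB _
  -- norms of basis vectors
  have hbAnorm : ∀ i, euclNorm (bA i : Fin m → ℝ) = 1 := by
    intro i
    rw [euclNorm_eq (bA i), bA.orthonormal.1 i]
  have hbBnorm : ∀ j, euclNorm (bB j : Fin n → ℝ) = 1 := by
    intro j
    rw [euclNorm_eq (bB j), bB.orthonormal.1 j]
  -- basis bound
  set T : Fin m × Fin n → Z := fun p => τ (bA p.1 : Fin m → ℝ) (bB p.2 : Fin n → ℝ) with hT
  have hTbound : ∀ p : Fin m × Fin n, NZ (T p) ≤ 1 + lam p.1 * mu p.2 := by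
    intro p
    have h := hτ (bA p.1 : Fin m → ℝ) (bB p.2 : Fin n → ℝ)
    rw [hbAnorm, hbBnorm, hmulA p.1, hmulB p.2] at h
    have h1 : euclNorm (lam p.1 • (bA p.1 : Fin m → ℝ)) = lam p.1 := by
      rw [show (lam p.1 • (bA p.1 : Fin m → ℝ)) = ((lam p.1 • bA p.1 : EuclideanSpace ℝ (Fin m)) : Fin m → ℝ) from rfl,
        euclNorm_eq, norm_smul, Real.norm_eq_abs, abs_of_nonneg (hlam0 p.1), bA.orthonormal.1 p.1, mul_one]
    have h2 : euclNorm (mu p.2 • (bB p.2 : Fin n → ℝ)) = mu p.2 := by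
      rw [show (mu p.2 • (bB p.2 : Fin n → ℝ)) = ((mu p.2 • bB p.2 : EuclideanSpace ℝ (Fin n)) : Fin n → ℝ) from rfl,
        euclNorm_eq, norm_smul, Real.norm_eq_abs, abs_of_nonneg (hmu0 p.2), bB.orthonormal.1 p.2, mul_one]
    rw [h1, h2] at h
    simpa using h
  -- expansion of τ
  have hexp : ∀ (x : Fin m → ℝ) (y : Fin n → ℝ),
      τ x y = ∑ p : Fin m × Fin n, (c x p.1 * d y p.2) • T p := by
    intro x y
    conv_lhs => rw [hxstack x, hystack y]
    rw [map_sum τ _ Finset.univ, LinearMap.sum_apply, Fintype.sum_prod_type]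
    refine Finset.sum_congr rfl fun i _ => ?_
    rw [LinearMap.map_smul, LinearMap.smul_apply, map_sum, Finset.smul_sum]
    refine Finset.sum_congr rfl fun j _ => ?_
    rw [LinearMap.map_smul, smul_smul]
  -- the splitting set
  set S : Finset (Fin m × Fin n) :=
    Finset.univ.filter (fun p => lam p.1 * mu p.2 < 1) with hS
  -- the two bilinear pieces
  set τ₀ : (Fin m → ℝ) →ₗ[ℝ] (Fin n → ℝ) →ₗ[ℝ] Z :=
    LinearMap.mk₂ ℝ (fun x y => ∑ p ∈ S, (c x p.1 * d y p.2) • T p)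
      (fun x x' y => by
        rw [← Finset.sum_add_distrib]
        refine Finset.sum_congr rfl fun p _ => ?_
        rw [hcadd, add_mul, add_smul])
      (fun r x y => by
        rw [Finset.smul_sum]
        refine Finset.sum_congr rfl fun p _ => ?_
        rw [hcsmul, smul_smul, mul_assoc])
      (fun x y y' => by
        rw [← Finset.sum_add_distrib]
        refine Finset.sum_congr rfl fun p _ => ?_
        rw [hdadd, mul_add, add_smul])
      (fun r x y => by
        rw [Finset.smul_sum]
        refine Finset.sum_congr rfl fun p _ => ?_
        rw [hdsmul, smul_smul, mul_left_comm]) with hτ₀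
  set τ₁ : (Fin m → ℝ) →ₗ[ℝ] (Fin n → ℝ) →ₗ[ℝ] Z :=
    LinearMap.mk₂ ℝ (fun x y => ∑ p ∈ Sᶜ, (c x p.1 * d y p.2) • T p)
      (fun x x' y => by
        rw [← Finset.sum_add_distrib]
        refine Finset.sum_congr rfl fun p _ => ?_
        rw [hcadd, add_mul, add_smul])
      (fun r x y => by
        rw [Finset.smul_sum]
        refine Finset.sum_congr rfl fun p _ => ?_
        rw [hcsmul, smul_smul, mul_assoc])
      (fun x y y' => by
        rw [← Finset.sum_add_distrib]
        refine Finset.sum_congr rfl fun p _ => ?_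
        rw [hdadd, mul_add, add_smul])
      (fun r x y => by
        rw [Finset.smul_sum]
        refine Finset.sum_congr rfl fun p _ => ?_
        rw [hdsmul, smul_smul, mul_left_comm]) with hτ₁
  refine ⟨τ₀, τ₁, ?_, ?_, ?_⟩
  · intro x y
    rw [hexp x y]
    have : τ₀ x y = ∑ p ∈ S, (c x p.1 * d y p.2) • T p := rfl
    have h1 : τ₁ x y = ∑ p ∈ Sᶜ, (c x p.1 * d y p.2) • T p := rfl
    rw [this, h1, ← Finset.sum_add_sum_compl S]
  · -- τ₀ bound
    intro x y
    have hkey := key_estimate hNZ hκ S T (fun _ => 1) (fun _ => 1)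
      (fun _ => zero_le_one) (fun _ => zero_le_one)
      (fun p hp => by
        have hp' : lam p.1 * mu p.2 < 1 := by
          rw [hS, Finset.mem_filter] at hp
          exact hp.2
        calc NZ (T p) ≤ 1 + lam p.1 * mu p.2 := hTbound p
          _ ≤ 2 * (1 * 1) := by nlinarith
      ) (c x) (d y)
    have h0 : NZ (τ₀ x y) ≤ 2 * κ ^ (m * n) * ((∑ i, |c x i|) * (∑ j, |d y j|)) := by
      have e : τ₀ x y = ∑ p ∈ S, (c x p.1 * d y p.2) • T p := rfl
      rw [e]; simpa using hkey
    have hcx : ∑ i, |c x i| ≤ Real.sqrt m * euclNorm x := by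
      rw [hNx x]; exact sum_abs_le_sqrt (c x)
    have hdy : ∑ j, |d y j| ≤ Real.sqrt n * euclNorm y := by
      rw [hNy y]; exact sum_abs_le_sqrt (d y)
    calc NZ (τ₀ x y) ≤ 2 * κ ^ (m * n) * ((∑ i, |c x i|) * (∑ j, |d y j|)) := h0
      _ ≤ 2 * κ ^ (m * n) * ((Real.sqrt m * euclNorm x) * (Real.sqrt n * euclNorm y)) := by
          have h2 : (0:ℝ) ≤ 2 * κ ^ (m * n) := by positivity
          apply mul_le_mul_of_nonneg_left _ h2
          apply mul_le_mul hcx hdy (Finset.sum_nonneg fun j _ => abs_nonneg _)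
          have : (0:ℝ) ≤ euclNorm x := Real.sqrt_nonneg _
          positivity
      _ = 2 * κ ^ (m * n) * (Real.sqrt m * Real.sqrt n) * (euclNorm x * euclNorm y) := by ring
  · -- τ₁ bound
    intro x y
    have hkey := key_estimate hNZ hκ Sᶜ T lam mu hlam0 hmu0
      (fun p hp => by
        have hp' : 1 ≤ lam p.1 * mu p.2 := by
          rw [hS, Finset.mem_compl, Finset.mem_filter] at hp
          push_neg at hp
          exact hp (Finset.mem_univ p)
        calc NZ (T p) ≤ 1 + lam p.1 * mu p.2 := hTbound p
          _ ≤ 2 * (lam p.1 * mu p.2) := by nlinarith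
      ) (c x) (d y)
    have hcx : ∑ i, |c x i| * lam i ≤ Real.sqrt m * euclNorm (A.mulVec x) := by
      rw [hNAx x]
      calc ∑ i, |c x i| * lam i = ∑ i, |lam i * c x i| := by
            apply Finset.sum_congr rfl
            intro i _
            rw [abs_mul, abs_of_nonneg (hlam0 i), mul_comm]
        _ ≤ Real.sqrt m * Real.sqrt (∑ i, (lam i * c x i) ^ 2) :=
            sum_abs_le_sqrt _
    have hdy : ∑ j, |d y j| * mu j ≤ Real.sqrt n * euclNorm (B.mulVec y) := by
      rw [hNBy y]
      calc ∑ j, |d y j| * mu j = ∑ j, |mu j * d y j| := by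
            apply Finset.sum_congr rfl
            intro j _
            rw [abs_mul, abs_of_nonneg (hmu0 j), mul_comm]
        _ ≤ Real.sqrt n * Real.sqrt (∑ j, (mu j * d y j) ^ 2) :=
            sum_abs_le_sqrt _
    calc NZ (τ₁ x y) ≤ 2 * κ ^ (m * n) * ((∑ i, |c x i| * lam i) * (∑ j, |d y j| * mu j)) := hkey
      _ ≤ 2 * κ ^ (m * n) * ((Real.sqrt m * euclNorm (A.mulVec x)) * (Real.sqrt n * euclNorm (B.mulVec y))) := by
          have h2 : (0:ℝ) ≤ 2 * κ ^ (m * n) := by positivity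
          apply mul_le_mul_of_nonneg_left _ h2
          apply mul_le_mul hcx hdy
            (Finset.sum_nonneg fun j _ => mul_nonneg (abs_nonneg _) (hmu0 j))
          have : (0:ℝ) ≤ euclNorm (A.mulVec x) := Real.sqrt_nonneg _
          positivity
      _ = 2 * κ ^ (m * n) * (Real.sqrt m * Real.sqrt n)
            * (euclNorm (A.mulVec x) * euclNorm (B.mulVec y)) := by ring
end
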